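/- Let p be a prime, d ≥ 3, and let B : Z_p^d × Z_p^d → Z_p^{d−1} be the bilinear map with B(u, v)_k = u_k v_{k+1} − u_{k+1} v_k. Then the Jacobson radical J of the ring Adj(B) equals {(y·E_{21} + z·E_{d−1,d}, −(y·E_{21} + z·E_{d−1,d})) : y, z ∈ Z_p}, and J² = 0. -/

import Mathlib

open Matrix MulOpposite

/-- The type-`A` bilinear map `B : ℤₚᵈ × ℤₚᵈ → ℤₚ^{d−1}`,
`B(u,v)_k = u_k v_{k+1} − u_{k+1} v_k`. -/
def Bform (p d : ℕ) (u v : Fin d → ZMod p) : Fin (d - 1) → ZMod p :=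
  fun k => u ⟨(k : ℕ), by have := k.isLt; omega⟩ * v ⟨(k : ℕ) + 1, by have := k.isLt; omega⟩
    - u ⟨(k : ℕ) + 1, by have := k.isLt; omega⟩ * v ⟨(k : ℕ), by have := k.isLt; omega⟩

theorem Bform_add_left (p d : ℕ) (u u' v : Fin d → ZMod p) :
    Bform p d (u + u') v = Bform p d u v + Bform p d u' v := by
  funext k; simp [Bform]; ring

theorem Bform_add_right (p d : ℕ) (u v v' : Fin d → ZMod p) :
    Bform p d u (v + v') = Bform p d u v + Bform p d u v' := by
  funext k; simp [Bform]; ring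

theorem Bform_neg_left (p d : ℕ) (u v : Fin d → ZMod p) :
    Bform p d (-u) v = -Bform p d u v := by
  funext k; simp [Bform]; ring

theorem Bform_neg_right (p d : ℕ) (u v : Fin d → ZMod p) :
    Bform p d u (-v) = -Bform p d u v := by
  funext k; simp [Bform]; ring

/-- The adjoint ring `Adj(B)` of the type-`A` bilinear map `B = Bform p d`, realized as a
subring of `M_d(ℤₚ) × M_d(ℤₚ)ᵐᵒᵖ` (so that the multiplication is
`(f,g)·(f',g') = (f f', g' g)`), with matrices acting on row vectors on the right:
`(f, g) ∈ Adj(B)` iff `B(u f, v) = B(u, v g)` for all row vectors `u, v`. -/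
def AdjRing (p d : ℕ) :
    Subring (Matrix (Fin d) (Fin d) (ZMod p) × (Matrix (Fin d) (Fin d) (ZMod p))ᵐᵒᵖ) where
  carrier := {fg | ∀ u v : Fin d → ZMod p,
    Bform p d (u ᵥ* fg.1) v = Bform p d u (v ᵥ* fg.2.unop)}
  zero_mem' := by intro u v; simp [Matrix.vecMul_zero]; funext k; simp [Bform]
  one_mem' := by intro u v; simp [Matrix.vecMul_one]
  add_mem' := by
    rintro a b ha hb u v
    simp only [Prod.fst_add, Prod.snd_add, unop_add, Matrix.vecMul_add]
    rw [Bform_add_left, Bform_add_right, ha u v, hb u v]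
  neg_mem' := by
    rintro a ha u v
    simp only [Prod.fst_neg, Prod.snd_neg, unop_neg, Matrix.vecMul_neg]
    rw [Bform_neg_left, Bform_neg_right, ha u v]
  mul_mem' := by
    rintro a b ha hb u v
    show Bform p d (u ᵥ* (a.1 * b.1)) v = Bform p d u (v ᵥ* (a.2 * b.2).unop)
    rw [unop_mul, ← Matrix.vecMul_vecMul, ← Matrix.vecMul_vecMul, hb, ha]

/-!
Testing `B(u f, v) = B(u, v g)` on standard basis vectors shows that an adjoint pair has the
shape `f = diag(a, b, a, …) + y E₂₁ + z E_{d-1,d}`, `g = diag(b, a, b, …) - y E₂₁ - z E_{d-1,d}`;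
this needs `d ≥ 3`, so that row 1 of both matrices vanishes off the diagonal. Hence `f ↦ f₁₁`
and `g ↦ g₁₁` are ring homomorphisms `Adj(B) → ℤₚ`. Their kernels are maximal, so they contain
`J`, and their common kernel is the set of pairs with `a = b = 0`. Any two such pairs multiply to
zero, so for `x` in the common kernel every `w x` is nilpotent, which puts `x` in `J`.
-/

namespace Ideal

theorem mem_jacobson_bot_of_forall_isNilpotent_mul {R : Type*} [Ring R] {x : R}
    (h : ∀ y, IsNilpotent (y * x)) : x ∈ jacobson (⊥ : Ideal R) := by
  refine mem_jacobson_iff.mpr fun y => ?_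
  obtain ⟨u, hu⟩ := (h y).isUnit_add_one
  refine ⟨↑u⁻¹, ?_⟩
  rw [mem_bot, mul_assoc, ← mul_add_one, ← hu, Units.inv_mul, sub_self]

theorem jacobson_bot_le_ker {R K : Type*} [Ring R] [DivisionRing K] (φ : R →+* K)
    (hφ : Function.Surjective φ) : jacobson (⊥ : Ideal R) ≤ RingHom.ker φ :=
  sInf_le ⟨bot_le, RingHom.ker_isMaximal_of_surjective φ hφ⟩

end Ideal

theorem Matrix.mul_apply_of_offDiag_row_eq_zero {n R : Type*} [Fintype n] [DecidableEq n]
    [NonUnitalNonAssocSemiring R] {M N : Matrix n n R} {i : n} (hM : ∀ c, c ≠ i → M i c = 0)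
    (j : n) : (M * N) i j = M i i * N i j := by
  rw [mul_apply, Finset.sum_eq_single i (fun c _ hc => by rw [hM c hc, zero_mul]) (by simp)]

theorem Bform_swap (p d : ℕ) (u v : Fin d → ZMod p) : Bform p d v u = -Bform p d u v := by
  funext k; simp only [Bform, Pi.neg_apply]; ring

section CornerMatrix

variable {d : ℕ} {R : Type*}

-- `y • E_{21} + z • E_{d-1,d}` in the paper's 1-based indexing
def cornerMatrix [Semiring R] (hd : 2 < d) (y z : R) : Matrix (Fin d) (Fin d) R :=
  y • single ⟨1, by omega⟩ ⟨0, by omega⟩ 1 + z • single ⟨d - 2, by omega⟩ ⟨d - 1, by omega⟩ 1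

theorem cornerMatrix_apply [Semiring R] (hd : 2 < d) (y z : R) (i c : Fin d) :
    cornerMatrix hd y z i c =
      if (i : ℕ) = 1 ∧ (c : ℕ) = 0 then y
      else if (i : ℕ) = d - 2 ∧ (c : ℕ) = d - 1 then z else 0 := by
  simp only [cornerMatrix, smul_single, smul_eq_mul, mul_one, Matrix.add_apply, single_apply,
    Fin.ext_iff]
  split_ifs <;> first | omega | simp

theorem cornerMatrix_mul_cornerMatrix [CommSemiring R] (hd : 2 < d) (y z y' z' : R) :
    cornerMatrix hd y z * cornerMatrix hd y' z' = 0 := by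
  simp only [cornerMatrix, smul_single, smul_eq_mul, mul_one, add_mul, mul_add]
  rw [single_mul_single_of_ne, single_mul_single_of_ne, single_mul_single_of_ne,
    single_mul_single_of_ne, add_zero, add_zero]
  all_goals simp only [ne_eq, Fin.ext_iff]; omega

theorem neg_cornerMatrix [Ring R] (hd : 2 < d) (y z : R) :
    -cornerMatrix hd y z = cornerMatrix hd (-y) (-z) := by
  simp only [cornerMatrix, neg_add, neg_smul]

def cornerPair [Ring R] (hd : 2 < d) (y z : R) :
    Matrix (Fin d) (Fin d) R × (Matrix (Fin d) (Fin d) R)ᵐᵒᵖ :=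
  (cornerMatrix hd y z, op (-cornerMatrix hd y z))

theorem cornerPair_mul_cornerPair [CommRing R] (hd : 2 < d) (y z y' z' : R) :
    cornerPair hd y z * cornerPair hd y' z' = 0 := by
  simp only [cornerPair, Prod.mk_mul_mk, ← op_mul, neg_mul_neg, cornerMatrix_mul_cornerMatrix,
    op_zero, Prod.mk_zero_zero]

end CornerMatrix

namespace AdjRing

variable {p d : ℕ} {f g : Matrix (Fin d) (Fin d) (ZMod p)}

theorem swap_mem (h : (f, op g) ∈ AdjRing p d) : (g, op f) ∈ AdjRing p d := by
  intro u v
  have huv : Bform p d (v ᵥ* f) u = Bform p d v (u ᵥ* g) := h v u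
  show Bform p d (u ᵥ* g) v = Bform p d u (v ᵥ* f)
  rw [Bform_swap p d v (u ᵥ* g), ← huv, Bform_swap p d (v ᵥ* f) u]

theorem entry_relation (h : (f, op g) ∈ AdjRing p d) (i j : Fin d) (k : ℕ) (hk : k + 1 < d) :
    f i ⟨k, by omega⟩ * (Pi.single j 1 : Fin d → ZMod p) ⟨k + 1, hk⟩
        - f i ⟨k + 1, hk⟩ * (Pi.single j 1 : Fin d → ZMod p) ⟨k, by omega⟩ =
      (Pi.single i 1 : Fin d → ZMod p) ⟨k, by omega⟩ * g j ⟨k + 1, hk⟩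
        - (Pi.single i 1 : Fin d → ZMod p) ⟨k + 1, hk⟩ * g j ⟨k, by omega⟩ := by
  simpa [Bform] using congrFun (h (Pi.single i 1) (Pi.single j 1)) ⟨k, by omega⟩

theorem apply_eq_zero_of_ne_of_ne_succ (h : (f, op g) ∈ AdjRing p d) {i : Fin d} {k : ℕ}
    (hk : k + 1 < d) (hi : (i : ℕ) ≠ k) (hi' : (i : ℕ) ≠ k + 1) : f i ⟨k, by omega⟩ = 0 := by
  simpa [Pi.single_apply, Fin.ext_iff, Ne.symm hi, Ne.symm hi'] using
    entry_relation h i ⟨k + 1, hk⟩ k hk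

theorem apply_succ_eq_zero_of_ne_of_ne_succ (h : (f, op g) ∈ AdjRing p d) {i : Fin d} {k : ℕ}
    (hk : k + 1 < d) (hi : (i : ℕ) ≠ k) (hi' : (i : ℕ) ≠ k + 1) : f i ⟨k + 1, hk⟩ = 0 := by
  simpa [Pi.single_apply, Fin.ext_iff, Ne.symm hi, Ne.symm hi'] using
    entry_relation h i ⟨k, by omega⟩ k hk

theorem diag_eq_diag_of_succ (h : (f, op g) ∈ AdjRing p d) {i c : Fin d}
    (hic : (c : ℕ) = i + 1) : f i i = g c c := by
  obtain ⟨i, hi⟩ := i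
  obtain ⟨c, hc⟩ := c
  dsimp only at hic
  subst hic
  simpa [Pi.single_apply, Fin.ext_iff] using entry_relation h ⟨i, hi⟩ ⟨i + 1, hc⟩ i hc

theorem snd_apply_of_adjacent (h : (f, op g) ∈ AdjRing p d) {i c : Fin d}
    (hic : (i : ℕ) = c + 1 ∨ (c : ℕ) = i + 1) : g i c = -f i c := by
  obtain ⟨i, hi⟩ := i
  obtain ⟨c, hc⟩ := c
  dsimp only at hic
  rcases hic with rfl | rfl
  · simpa [eq_neg_iff_add_eq_zero, add_comm] using entry_relation h ⟨c + 1, hi⟩ ⟨c + 1, hi⟩ c hi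
  · simpa [neg_eq_iff_eq_neg, eq_neg_iff_add_eq_zero, add_comm] using
      entry_relation h ⟨i, hi⟩ ⟨i, hi⟩ i hc

-- Column `c` of `f` lives in rows `c, c + 1` (if `c + 1 < d`) and in rows `c - 1, c` (if `0 < c`).
theorem apply_eq_zero (h : (f, op g) ∈ AdjRing p d) {i c : Fin d} (hic : i ≠ c)
    (h10 : ¬((i : ℕ) = 1 ∧ (c : ℕ) = 0)) (hlast : ¬((i : ℕ) = d - 2 ∧ (c : ℕ) = d - 1)) :
    f i c = 0 := by
  obtain ⟨c, hc⟩ := c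
  dsimp only at h10 hlast
  have hic : (i : ℕ) ≠ c := fun e => hic (Fin.ext e)
  by_cases hleft : c + 1 < d ∧ (i : ℕ) ≠ c + 1
  · exact apply_eq_zero_of_ne_of_ne_succ h hleft.1 hic hleft.2
  · obtain ⟨k, rfl⟩ : ∃ k, c = k + 1 := ⟨c - 1, by omega⟩
    exact apply_succ_eq_zero_of_ne_of_ne_succ h hc (by omega) hic

theorem diag_eq_zero (h : (f, op g) ∈ AdjRing p d) (hd : 0 < d)
    (hf : f ⟨0, hd⟩ ⟨0, hd⟩ = 0) (hg : g ⟨0, hd⟩ ⟨0, hd⟩ = 0) (i : Fin d) :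
    f i i = 0 ∧ g i i = 0 := by
  obtain ⟨n, hn⟩ := i
  induction n with
  | zero => exact ⟨hf, hg⟩
  | succ n ih =>
    obtain ⟨hfn, hgn⟩ := ih (by omega)
    exact ⟨(diag_eq_diag_of_succ (swap_mem h) (i := ⟨n, by omega⟩) rfl).symm.trans hgn,
      (diag_eq_diag_of_succ h (i := ⟨n, by omega⟩) rfl).symm.trans hfn⟩

theorem fst_eq_cornerMatrix (hd : 2 < d) (h : (f, op g) ∈ AdjRing p d)
    (hf : f ⟨0, by omega⟩ ⟨0, by omega⟩ = 0) (hg : g ⟨0, by omega⟩ ⟨0, by omega⟩ = 0) :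
    f = cornerMatrix hd (f ⟨1, by omega⟩ ⟨0, by omega⟩)
      (f ⟨d - 2, by omega⟩ ⟨d - 1, by omega⟩) := by
  ext ⟨i, hi⟩ ⟨c, hc⟩
  rw [cornerMatrix_apply]
  dsimp only
  by_cases hic : i = c
  · subst hic
    rw [(diag_eq_zero h (by omega) hf hg _).1, if_neg (by omega), if_neg (by omega)]
  split_ifs with h10 hlast
  · obtain ⟨rfl, rfl⟩ := h10
    rfl
  · obtain ⟨rfl, rfl⟩ := hlast
    rfl
  · exact apply_eq_zero h (fun e => hic (Fin.mk.inj e)) h10 hlast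

theorem snd_eq_neg_cornerMatrix (hd : 2 < d) (h : (f, op g) ∈ AdjRing p d)
    (hf : f ⟨0, by omega⟩ ⟨0, by omega⟩ = 0) (hg : g ⟨0, by omega⟩ ⟨0, by omega⟩ = 0) :
    g = -cornerMatrix hd (f ⟨1, by omega⟩ ⟨0, by omega⟩)
      (f ⟨d - 2, by omega⟩ ⟨d - 1, by omega⟩) := by
  rw [fst_eq_cornerMatrix hd (swap_mem h) hg hf, neg_cornerMatrix,
    snd_apply_of_adjacent h (Or.inl rfl), snd_apply_of_adjacent h (Or.inr (by dsimp only; omega))]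

theorem apply_zero_eq_zero (hd : 2 < d) (h : (f, op g) ∈ AdjRing p d) {c : Fin d}
    (hc : c ≠ ⟨0, by omega⟩) : f ⟨0, by omega⟩ c = 0 := by
  have hc' : (c : ℕ) ≠ 0 := fun e => hc (Fin.ext e)
  exact apply_eq_zero h hc.symm (by simp) (by dsimp only; omega)

def evalFst (hd : 2 < d) : AdjRing p d →+* ZMod p where
  toFun x := x.val.1 ⟨0, by omega⟩ ⟨0, by omega⟩
  map_one' := rfl
  map_zero' := rfl
  map_add' _ _ := rfl
  map_mul' x _ := mul_apply_of_offDiag_row_eq_zero (fun _ hc => apply_zero_eq_zero hd x.2 hc) _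

def evalSnd (hd : 2 < d) : AdjRing p d →+* ZMod p where
  toFun x := x.val.2.unop ⟨0, by omega⟩ ⟨0, by omega⟩
  map_one' := rfl
  map_zero' := rfl
  map_add' _ _ := rfl
  map_mul' x y := (mul_apply_of_offDiag_row_eq_zero (M := y.val.2.unop) (N := x.val.2.unop)
    (fun _ hc => apply_zero_eq_zero hd (swap_mem y.2) hc) _).trans (mul_comm _ _)

theorem evalFst_eq_zero_and_evalSnd_eq_zero_iff (hd : 2 < d) (x : AdjRing p d) :
    evalFst hd x = 0 ∧ evalSnd hd x = 0 ↔ ∃ y z : ZMod p, x.val = cornerPair hd y z := by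
  constructor
  · rintro ⟨hf, hg⟩
    exact ⟨_, _, Prod.ext (fst_eq_cornerMatrix hd x.2 hf hg)
      (congrArg op (snd_eq_neg_cornerMatrix hd x.2 hf hg))⟩
  · rintro ⟨y, z, hx⟩
    show x.val.1 _ _ = 0 ∧ x.val.2.unop _ _ = 0
    simp only [hx, cornerPair, unop_op, Matrix.neg_apply, cornerMatrix_apply]
    rw [if_neg (by omega), if_neg (by omega), neg_zero, and_self]

theorem mul_eq_zero_of_evals_eq_zero (hd : 2 < d) {x x' : AdjRing p d}
    (hx : evalFst hd x = 0 ∧ evalSnd hd x = 0) (hx' : evalFst hd x' = 0 ∧ evalSnd hd x' = 0) :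
    x * x' = 0 := by
  obtain ⟨y, z, hyz⟩ := (evalFst_eq_zero_and_evalSnd_eq_zero_iff hd x).1 hx
  obtain ⟨y', z', hyz'⟩ := (evalFst_eq_zero_and_evalSnd_eq_zero_iff hd x').1 hx'
  exact Subtype.ext (by rw [Subring.coe_mul, hyz, hyz', cornerPair_mul_cornerPair]; rfl)

theorem mem_jacobson_iff_evals_eq_zero [Fact p.Prime] (hd : 2 < d) (x : AdjRing p d) :
    x ∈ Ideal.jacobson (⊥ : Ideal (AdjRing p d)) ↔ evalFst hd x = 0 ∧ evalSnd hd x = 0 := by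
  refine ⟨fun hx => ⟨?_, ?_⟩, fun hx => ?_⟩
  · exact Ideal.jacobson_bot_le_ker _ (ZMod.ringHom_surjective _) hx
  · exact Ideal.jacobson_bot_le_ker _ (ZMod.ringHom_surjective _) hx
  refine Ideal.mem_jacobson_bot_of_forall_isNilpotent_mul fun w => ⟨2, ?_⟩
  have hwx : evalFst hd (w * x) = 0 ∧ evalSnd hd (w * x) = 0 := by
    simp only [map_mul, hx.1, hx.2, mul_zero, and_self]
  rw [pow_two, mul_eq_zero_of_evals_eq_zero hd hwx hwx]

end AdjRing

/-- Let `p` be a prime, `d ≥ 3`, and let `B` be the bilinear map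
`B(u,v)_k = u_k v_{k+1} − u_{k+1} v_k`.  The Jacobson radical `J` of the ring `Adj(B)`
(the intersection of its maximal left ideals, i.e. `Ideal.jacobson ⊥`) consists exactly of
the pairs `(y·E_{21} + z·E_{d−1,d}, −(y·E_{21} + z·E_{d−1,d}))` with `y, z ∈ ℤₚ`
(in `0`-based indexing `E_{21} = E 1 0`, `E_{d−1,d} = E (d−2) (d−1)`), and `J² = 0`. -/
theorem jacobson_adjoint_typeA (p d : ℕ) [Fact p.Prime] (hd : 3 ≤ d) :
    (∀ x : AdjRing p d,
      x ∈ Ideal.jacobson (⊥ : Ideal (AdjRing p d)) ↔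
        ∃ y z : ZMod p,
          (x : Matrix (Fin d) (Fin d) (ZMod p) × (Matrix (Fin d) (Fin d) (ZMod p))ᵐᵒᵖ) =
            (y • Matrix.single ⟨1, by omega⟩ ⟨0, by omega⟩ 1
              + z • Matrix.single ⟨d - 2, by omega⟩ ⟨d - 1, by omega⟩ 1,
             MulOpposite.op
              (-(y • Matrix.single ⟨1, by omega⟩ ⟨0, by omega⟩ 1
                + z • Matrix.single ⟨d - 2, by omega⟩ ⟨d - 1, by omega⟩ 1)))) ∧
    (∀ x y : AdjRing p d, x ∈ Ideal.jacobson (⊥ : Ideal (AdjRing p d)) →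
      y ∈ Ideal.jacobson (⊥ : Ideal (AdjRing p d)) → x * y = 0) := by
  refine ⟨fun x => ?_, fun x y hx hy => ?_⟩
  · exact (AdjRing.mem_jacobson_iff_evals_eq_zero hd x).trans
      (AdjRing.evalFst_eq_zero_and_evalSnd_eq_zero_iff hd x)
  · exact AdjRing.mul_eq_zero_of_evals_eq_zero hd
      ((AdjRing.mem_jacobson_iff_evals_eq_zero hd x).1 hx)
      ((AdjRing.mem_jacobson_iff_evals_eq_zero hd y).1 hy)
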